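/- For every n ≥ 1, the cardinality of the Hecke–Kiselman monoid HK(Q_n) of the linearly oriented type-A quiver Q_n equals the (n+1)-st Catalan number C_{n+1} = (1/(n+2))·binom(2(n+1), n+1). -/

import Mathlib

/-- The defining relations of the Hecke–Kiselman monoid of a quiver with
vertex type `V` and arrow relation `arr`. -/
inductive HKRel {V : Type} (arr : V → V → Prop) : FreeMonoid V → FreeMonoid V → Prop
  | idem (t : V) :
      HKRel arr (FreeMonoid.of t * FreeMonoid.of t) (FreeMonoid.of t)
  | braid (s t : V) :
      HKRel arr (FreeMonoid.of s * FreeMonoid.of t * FreeMonoid.of s)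
        (FreeMonoid.of t * FreeMonoid.of s * FreeMonoid.of t)
  | absorb (s t : V) : ¬ arr t s →
      HKRel arr (FreeMonoid.of t * FreeMonoid.of s * FreeMonoid.of t)
        (FreeMonoid.of s * FreeMonoid.of t)

/-- The congruence on the free monoid generated by the Hecke–Kiselman relations. -/
def HKCon {V : Type} (arr : V → V → Prop) : Con (FreeMonoid V) := conGen (HKRel arr)

/-- The Hecke–Kiselman monoid of the quiver `(V, arr)`. -/
abbrev HK {V : Type} (arr : V → V → Prop) : Type := (HKCon arr).Quotient

/-- The generator of the Hecke–Kiselman monoid attached to the vertex `t`. -/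
def HK.x {V : Type} (arr : V → V → Prop) (t : V) : HK arr :=
  (HKCon arr).mk' (FreeMonoid.of t)

/-- The quiver `(V, arr)` is acyclic: the transitive closure of `arr` is irreflexive. -/
def IsAcyclicQuiver {V : Type} (arr : V → V → Prop) : Prop :=
  ∀ v : V, ¬ Relation.TransGen arr v v

/-- The arrow relation of the linearly oriented type-`A` quiver `Q_n` with vertices
`1, …, n` (modelled as `Fin n`) and arrows `i → i+1`. -/
def arrQn (n : ℕ) : Fin n → Fin n → Prop := fun i j => (i : ℕ) + 1 = (j : ℕ)

/-!
`HK(Q_n)` acts on `ℕ` by letting `x_c` collapse `c + 1` onto `c`, and this action identifies it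
with the Catalan monoid `C_{n+1}` of order-preserving, order-decreasing maps of `{0, …, n}`.
The first return of the graph of such a map to the diagonal splits `C_{k+1}` into the pieces
`C_c × C_{k-c}`, which is Catalan's recurrence.

The action is onto: a map other than the identity is a collapse times a map closer to the
identity. It is faithful: the defining relations rewrite every element as a product
`run a₁ b₁ ⋯ run a_k b_k` of descending runs `run a b = x_a x_{a-1} ⋯ x_b` with `a₁ < ⋯ < a_k`
and `b₁ < ⋯ < b_k`, and the action of such a product determines its last run, since `a_k + 1` is
the largest point it moves and `b_k` the largest point it glues to its successor; removing that
run and inducting recovers the whole list.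
-/

namespace HK

variable {V : Type} {arr : V → V → Prop}

theorem mk'_eq_of_rel {w₁ w₂ : FreeMonoid V} (h : HKRel arr w₁ w₂) :
    (HKCon arr).mk' w₁ = (HKCon arr).mk' w₂ :=
  (Con.eq _).mpr (ConGen.Rel.of _ _ h)

theorem x_mul_self (t : V) : x arr t * x arr t = x arr t := by
  simpa only [x, map_mul] using mk'_eq_of_rel (HKRel.idem (arr := arr) t)

theorem x_braid (s t : V) : x arr s * x arr t * x arr s = x arr t * x arr s * x arr t := by
  simpa only [x, map_mul] using mk'_eq_of_rel (HKRel.braid (arr := arr) s t)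

theorem x_absorb {s t : V} (h : ¬ arr t s) : x arr t * x arr s * x arr t = x arr s * x arr t := by
  simpa only [x, map_mul] using mk'_eq_of_rel (HKRel.absorb s t h)

@[elab_as_elim]
theorem induction_on {P : HK arr → Prop} (z : HK arr) (one : P 1)
    (x_mul : ∀ t z, P z → P (x arr t * z)) : P z := by
  induction z using Con.induction_on with
  | _ w =>
    induction w using FreeMonoid.recOn with
    | one => exact one
    | of_mul t w ih => exact x_mul t _ ih

def lift {M : Type*} [Monoid M] (m : V → M) (idem : ∀ t, m t * m t = m t)
    (braid : ∀ s t, m s * m t * m s = m t * m s * m t)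
    (absorb : ∀ s t, ¬ arr t s → m t * m s * m t = m s * m t) : HK arr →* M :=
  Con.lift _ (FreeMonoid.lift m) <| Con.conGen_le.mpr fun _ _ h => by
    cases h <;> simp only [Con.ker_rel, map_mul, FreeMonoid.lift_eval_of] <;> simp_all

@[simp]
theorem lift_x {M : Type*} [Monoid M] (m : V → M) (idem braid absorb) (t : V) :
    lift (arr := arr) m idem braid absorb (x arr t) = m t :=
  (Con.lift_coe _ _).trans (FreeMonoid.lift_eval_of _ _)

end HK

/-- The Catalan monoid `C_m` of order-preserving, order-decreasing self-maps of `{0, …, m - 1}`,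
each extended by the identity on `[m, ∞)` so that all of them live in `Function.End ℕ`. -/
def catalanMonoid (m : ℕ) : Submonoid (Function.End ℕ) where
  carrier := {f | Monotone f ∧ (∀ x, f x ≤ x) ∧ ∀ x, m ≤ x → f x = x}
  one_mem' := ⟨monotone_id, le_refl, fun _ _ => rfl⟩
  mul_mem' {f g} := fun ⟨hf, hf_le, hf_fix⟩ ⟨hg, hg_le, hg_fix⟩ =>
    ⟨hf.comp hg, fun x => (hf_le _).trans (hg_le x), fun x hx => by
      change f (g x) = x
      rw [hg_fix x hx, hf_fix x hx]⟩

namespace catalanMonoid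

instance (m : ℕ) : Finite (catalanMonoid m) := by
  refine Finite.of_injective (fun f (x : Fin m) => (⟨f.1 x, ?_⟩ : Fin m)) fun f g hfg => ?_
  · exact (f.2.2.1 x).trans_lt x.2
  · refine Subtype.ext (funext fun x => ?_)
    by_cases hx : x < m
    · simpa using congrFun hfg ⟨x, hx⟩
    · rw [f.2.2.2 x (not_lt.1 hx), g.2.2.2 x (not_lt.1 hx)]

/-- `0`, then the graph of `p` on `[1, c]`, then that of `q` translated by `c + 1`. -/
def glue (c : ℕ) (p q : Function.End ℕ) : Function.End ℕ
  | 0 => 0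
  | x + 1 => if x < c then p x else q (x - c) + (c + 1)

theorem glue_mem {k c : ℕ} (hc : c ≤ k) {p q : Function.End ℕ} (hp : p ∈ catalanMonoid c)
    (hq : q ∈ catalanMonoid (k - c)) : glue c p q ∈ catalanMonoid (k + 1) := by
  obtain ⟨hp_mono, hp_le, hp_fix⟩ := hp
  obtain ⟨hq_mono, hq_le, hq_fix⟩ := hq
  refine ⟨monotone_nat_of_le_succ fun x => ?_, fun x => ?_, fun x hx => ?_⟩
  · rcases x with _ | x
    · exact Nat.zero_le _
    · simp only [glue]
      split_ifs with h₁ h₂ h₂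
      · exact hp_mono (Nat.le_succ x)
      · have := hp_le x; omega
      · omega
      · have := hq_mono (show x - c ≤ x + 1 - c by omega); omega
  · rcases x with _ | x
    · exact le_rfl
    · simp only [glue]
      split_ifs
      · have := hp_le x; omega
      · have := hq_le (x - c); omega
  · obtain ⟨x, rfl⟩ := Nat.exists_eq_add_of_le' (show 1 ≤ x by omega)
    simp only [glue, if_neg (show ¬ x < c by omega)]
    have := hq_fix (x - c) (by omega); omega

def lowerPart (c : ℕ) (f : Function.End ℕ) : Function.End ℕ :=
  fun x => if x < c then f (x + 1) else x

def upperPart (c : ℕ) (f : Function.End ℕ) : Function.End ℕ := fun x => f (x + c + 1) - (c + 1)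

section Split

variable {k c : ℕ} {f : Function.End ℕ}

theorem lowerPart_mem (hf : f ∈ catalanMonoid (k + 1)) (hc : ∀ x < c, f (x + 1) ≤ x) :
    lowerPart c f ∈ catalanMonoid c := by
  obtain ⟨hf_mono, -, -⟩ := hf
  refine ⟨monotone_nat_of_le_succ fun x => ?_, fun x => ?_, fun x hx => if_neg (by omega)⟩
  all_goals simp only [lowerPart]; split_ifs
  · exact hf_mono (by omega)
  · have := hc x ‹_›; omega
  · omega
  · omega
  · exact hc x ‹_›
  · exact le_rfl

theorem upperPart_mem (hf : f ∈ catalanMonoid (k + 1)) (hck : c ≤ k) (hc : f (c + 1) = c + 1) :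
    upperPart c f ∈ catalanMonoid (k - c) := by
  obtain ⟨hf_mono, hf_le, hf_fix⟩ := hf
  refine ⟨fun x y hxy => Nat.sub_le_sub_right (hf_mono (by omega)) _, fun x => ?_, fun x hx => ?_⟩
  · have := hf_le (x + c + 1)
    simp only [upperPart]
    omega
  · have := hf_fix (x + c + 1) (by omega)
    simp only [upperPart]
    omega

theorem glue_lowerPart_upperPart (hf : f ∈ catalanMonoid (k + 1)) (hc : f (c + 1) = c + 1) :
    glue c (lowerPart c f) (upperPart c f) = f := by
  funext x
  rcases x with _ | x
  · exact (Nat.le_zero.1 (hf.2.1 0)).symm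
  · simp only [glue, lowerPart, upperPart]
    split_ifs with h
    · rfl
    · have := hf.1 (show c + 1 ≤ x - c + c + 1 by omega)
      rw [show x - c + c + 1 = x + 1 by omega] at this ⊢
      omega

theorem lowerPart_glue {p q : Function.End ℕ} (hp : p ∈ catalanMonoid c) :
    lowerPart c (glue c p q) = p := by
  funext x
  simp only [lowerPart, glue]
  split_ifs with h
  · rfl
  · exact (hp.2.2 x (not_lt.1 h)).symm

theorem upperPart_glue {p q : Function.End ℕ} : upperPart c (glue c p q) = q := by
  funext x
  simp [upperPart, glue]

end Split

section Count

variable {k : ℕ}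

/-- The first point `c + 1 ≥ 1` at which the graph of `f` returns to the diagonal. -/
def firstReturn (f : catalanMonoid (k + 1)) : Fin (k + 1) :=
  haveI h : ∃ c, f.1 (c + 1) = c + 1 := ⟨k, f.2.2.2 _ le_rfl⟩
  ⟨Nat.find h, Nat.lt_succ_of_le (Nat.find_min' h (f.2.2.2 _ le_rfl))⟩

theorem firstReturn_eq_iff {f : catalanMonoid (k + 1)} {c : Fin (k + 1)} :
    firstReturn f = c ↔ f.1 (c + 1) = c + 1 ∧ ∀ x < (c : ℕ), f.1 (x + 1) ≤ x := by
  rw [Fin.ext_iff, firstReturn, Nat.find_eq_iff]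
  refine and_congr_right' (forall₂_congr fun x _ => ?_)
  have := f.2.2.1 (x + 1)
  omega

def firstReturnFiberEquiv (c : Fin (k + 1)) :
    {f : catalanMonoid (k + 1) // firstReturn f = c} ≃ catalanMonoid c × catalanMonoid (k - c) where
  toFun f :=
    (⟨lowerPart c f, lowerPart_mem f.1.2 (firstReturn_eq_iff.1 f.2).2⟩,
      ⟨upperPart c f, upperPart_mem f.1.2 (Nat.le_of_lt_succ c.2) (firstReturn_eq_iff.1 f.2).1⟩)
  invFun pq := ⟨⟨glue c pq.1 pq.2, glue_mem (Nat.le_of_lt_succ c.2) pq.1.2 pq.2.2⟩,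
    firstReturn_eq_iff.2
      ⟨by simpa [glue] using pq.2.2.2.1 0, fun x hx => by simpa [glue, hx] using pq.1.2.2.1 x⟩⟩
  left_inv f :=
    Subtype.ext (Subtype.ext (glue_lowerPart_upperPart f.1.2 (firstReturn_eq_iff.1 f.2).1))
  right_inv pq := Prod.ext (Subtype.ext (lowerPart_glue pq.1.2)) (Subtype.ext upperPart_glue)

theorem card_eq_catalan (m : ℕ) : Nat.card (catalanMonoid m) = catalan m := by
  induction m using Nat.strong_induction_on with
  | _ m ih =>
    rcases m with _ | k
    · rw [catalan_zero, Nat.card_eq_one_iff_unique]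
      refine ⟨⟨fun f g => Subtype.ext (funext fun x => ?_)⟩, ⟨1⟩⟩
      rw [f.2.2.2 x (Nat.zero_le x), g.2.2.2 x (Nat.zero_le x)]
    · rw [← Nat.card_congr ((Equiv.sigmaCongrRight firstReturnFiberEquiv).symm.trans
          (Equiv.sigmaFiberEquiv (firstReturn (k := k)))), Nat.card_sigma, catalan_succ]
      refine Finset.sum_congr rfl fun c _ => ?_
      rw [Nat.card_prod, ih c (by omega), ih (k - c) (by omega)]

end Count

end catalanMonoid

def collapse (c : ℕ) : Function.End ℕ := fun x => if x = c + 1 then c else x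

theorem collapse_mul_self (c : ℕ) : collapse c * collapse c = collapse c := by
  funext x
  change collapse c (collapse c x) = collapse c x
  simp only [collapse]
  split_ifs <;> omega

theorem collapse_braid (c d : ℕ) :
    collapse c * collapse d * collapse c = collapse d * collapse c * collapse d := by
  funext x
  change collapse c (collapse d (collapse c x)) = collapse d (collapse c (collapse d x))
  simp only [collapse]
  split_ifs <;> omega

theorem collapse_absorb {c d : ℕ} (h : d ≠ c + 1) :
    collapse c * collapse d * collapse c = collapse d * collapse c := by
  funext x
  change collapse c (collapse d (collapse c x)) = collapse d (collapse c x)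
  simp only [collapse]
  split_ifs <;> omega

theorem collapse_mem {c m : ℕ} (h : c < m) : collapse c ∈ catalanMonoid (m + 1) := by
  refine ⟨monotone_nat_of_le_succ fun x => ?_, fun x => ?_, fun x hx => if_neg (by omega)⟩ <;>
    simp only [collapse] <;> split_ifs <;> omega

theorem exists_greatest_apply_ne {m : ℕ} {f : Function.End ℕ} (hf : f ∈ catalanMonoid m)
    (hne : f ≠ 1) : ∃ x < m, f x < x ∧ ∀ y, x < y → f y = y := by
  classical
  obtain ⟨x₀, hx₀, hfx₀⟩ : ∃ x < m, f x ≠ x := by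
    by_contra! h
    exact hne (funext fun x => if hx : x < m then h x hx else hf.2.2 x (by omega))
  set x := Nat.findGreatest (fun y => f y ≠ y) m
  have hx : f x ≠ x := Nat.findGreatest_spec (P := fun y => f y ≠ y) hx₀.le hfx₀
  have habove : ∀ y, x < y → f y = y := fun y hy => by
    by_cases hym : y ≤ m
    · exact not_not.1 (Nat.findGreatest_is_greatest hy hym)
    · exact hf.2.2 y (by omega)
  refine ⟨x, ?_, lt_of_le_of_ne (hf.2.1 x) hx, habove⟩
  by_contra! hxm
  exact hx (hf.2.2 x hxm)

/-- Take `x` the largest point moved by `f`, `v = f x`, and `g` equal to `f` except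
`g x = v + 1`. -/
theorem exists_eq_collapse_mul {n : ℕ} {f : Function.End ℕ} (hf : f ∈ catalanMonoid (n + 1))
    (hne : f ≠ 1) : ∃ v < n, ∃ g ∈ catalanMonoid (n + 1), f = collapse v * g ∧
      ∑ y ∈ Finset.range (n + 1), (y - g y) < ∑ y ∈ Finset.range (n + 1), (y - f y) := by
  obtain ⟨x, hxn, hfx, habove⟩ := exists_greatest_apply_ne hf hne
  obtain ⟨hf_mono, hf_le, hf_fix⟩ := hf
  set g : Function.End ℕ := fun y => if y = x then f x + 1 else f y
  refine ⟨f x, by omega, g, ⟨monotone_nat_of_le_succ fun y => ?_, fun y => ?_, fun y hy => ?_⟩,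
    funext fun y => ?_, Finset.sum_lt_sum (fun y _ => ?_) ⟨x, by simp; omega, ?_⟩⟩
  · have := hf_mono (show y ≤ y + 1 by omega)
    have := habove (x + 1) (by omega)
    simp only [g]
    split_ifs with h₁ h₂ <;> subst_vars <;> omega
  · simp only [g]
    have := hf_le y
    split_ifs <;> omega
  · simp only [g]
    rw [if_neg (by omega), hf_fix y hy]
  · change f y = collapse (f x) (g y)
    simp only [g, collapse]
    split_ifs with h₁ h₂ <;> try omega
    · rw [h₁]
    · rcases lt_or_gt_of_ne h₁ with hy | hy
      · have := hf_mono hy.le; omega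
      · have := habove y hy; omega
  · simp only [g]
    split_ifs with h <;> subst_vars <;> omega
  · simp only [g, if_pos rfl]
    omega

namespace HKQn

/-- The generator `x_c` of `HK(Q_n)`, extended by `1` for `c ≥ n` so that indices can be
manipulated freely in `ℕ`. -/
def gen (n c : ℕ) : HK (arrQn n) := if h : c < n then HK.x (arrQn n) ⟨c, h⟩ else 1

variable {n : ℕ}

theorem gen_of_lt {c : ℕ} (h : c < n) : gen n c = HK.x (arrQn n) ⟨c, h⟩ := dif_pos h

theorem gen_of_le {c : ℕ} (h : n ≤ c) : gen n c = 1 := dif_neg (not_lt.2 h)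

theorem gen_mul_self (c : ℕ) : gen n c * gen n c = gen n c := by
  rcases lt_or_ge c n with hc | hc
  · simp only [gen_of_lt hc, HK.x_mul_self]
  · simp only [gen_of_le hc, mul_one]

theorem gen_braid (c d : ℕ) : gen n c * gen n d * gen n c = gen n d * gen n c * gen n d := by
  rcases lt_or_ge c n with hc | hc <;> rcases lt_or_ge d n with hd | hd
  · simp only [gen_of_lt hc, gen_of_lt hd, HK.x_braid]
  · simp only [gen_of_le hd, mul_one, one_mul, gen_mul_self]
  · simp only [gen_of_le hc, mul_one, one_mul, gen_mul_self]
  · simp only [gen_of_le hc, gen_of_le hd, mul_one]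

theorem gen_absorb {c d : ℕ} (h : d ≠ c + 1) :
    gen n c * gen n d * gen n c = gen n d * gen n c := by
  rcases lt_or_ge c n with hc | hc <;> rcases lt_or_ge d n with hd | hd
  · simp only [gen_of_lt hc, gen_of_lt hd]
    exact HK.x_absorb fun h' => h h'.symm
  · simp only [gen_of_le hd, mul_one, one_mul, gen_mul_self]
  · simp only [gen_of_le hc, mul_one, one_mul]
  · simp only [gen_of_le hc, gen_of_le hd, mul_one]

theorem commute_gen {c d : ℕ} (h : c + 2 ≤ d) : Commute (gen n c) (gen n d) := by
  rw [Commute, SemiconjBy, ← gen_absorb (c := d) (d := c) (by omega), ← gen_braid,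
    gen_absorb (by omega)]

theorem gen_mul_gen_succ_mul_gen (c : ℕ) :
    gen n c * gen n (c + 1) * gen n c = gen n c * gen n (c + 1) := by
  rw [gen_braid, gen_absorb (by omega)]

/-- `run n a b = x_a x_{a-1} ⋯ x_b`, and `1` when `a < b`. -/
def run (n a b : ℕ) : HK (arrQn n) := ((List.range' b (a + 1 - b)).reverse.map (gen n)).prod

variable {a b c d : ℕ}

theorem run_self (a : ℕ) : run n a a = gen n a := by
  simp [run]

theorem run_of_lt (h : a < b) : run n a b = 1 := by
  simp [run, show a + 1 - b = 0 by omega]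

theorem run_eq_mul (h₁ : b ≤ d + 1) (h₂ : d ≤ a) : run n a b = run n a (d + 1) * run n d b := by
  have : List.range' b (a + 1 - b) = List.range' b (d + 1 - b) ++ List.range' (d + 1) (a - d) := by
    have := (List.range'_append_1 (s := b) (m := d + 1 - b) (n := a - d)).symm
    rwa [show b + (d + 1 - b) = d + 1 by omega, show d + 1 - b + (a - d) = a + 1 - b by omega]
      at this
  rw [run, this, List.reverse_append, List.map_append, List.prod_append, run, run,
    show a + 1 - (d + 1) = a - d by omega]

theorem run_succ (h : b ≤ a + 1) : run n (a + 1) b = gen n (a + 1) * run n a b := by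
  rw [run_eq_mul h (Nat.le_succ a), run_self]

theorem run_eq_run_mul_gen (h : b ≤ a) : run n a b = run n a (b + 1) * gen n b := by
  rw [run_eq_mul (d := b) (Nat.le_succ b) h, run_self]

theorem commute_gen_run (h : a + 2 ≤ c ∨ c + 2 ≤ b) : Commute (gen n c) (run n a b) := by
  refine Commute.list_prod_right _ _ fun y hy => ?_
  simp only [List.mem_map, List.mem_reverse, List.mem_range'_1] at hy
  obtain ⟨x, hx, rfl⟩ := hy
  rcases h with h | h
  · exact (commute_gen (by omega)).symm
  · exact commute_gen (by omega)

theorem commute_run_run {a' b' : ℕ} (h : a' + 2 ≤ b) : Commute (run n a b) (run n a' b') := by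
  refine Commute.list_prod_left _ _ fun y hy => ?_
  simp only [List.mem_map, List.mem_reverse, List.mem_range'_1] at hy
  obtain ⟨x, hx, rfl⟩ := hy
  exact commute_gen_run (Or.inl (by omega))

theorem exists_run_eq_gen_mul (h : b ≤ a) :
    ∃ B, run n a b = gen n a * B ∧ Commute (gen n (a + 1)) B := by
  rcases h.eq_or_lt with rfl | h
  · exact ⟨1, by rw [run_self, mul_one], Commute.one_right _⟩
  · obtain ⟨a, rfl⟩ := Nat.exists_eq_add_of_lt h
    exact ⟨run n (b + a) b, run_succ (by omega), commute_gen_run (Or.inl (by omega))⟩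

theorem gen_mul_run (h : b ≤ a) : gen n a * run n a b = run n a b := by
  obtain ⟨B, hB, -⟩ := exists_run_eq_gen_mul (n := n) h
  rw [hB, ← mul_assoc, gen_mul_self]

theorem run_succ_mul_gen (h : b ≤ a) :
    run n (a + 1) b * gen n (a + 1) = run n a b * gen n (a + 1) := by
  obtain ⟨B, hB, hcomm⟩ := exists_run_eq_gen_mul (n := n) h
  rw [run_succ (by omega), hB, mul_assoc, mul_assoc, ← hcomm.eq, ← mul_assoc, ← mul_assoc,
    gen_absorb (by omega), mul_assoc, hcomm.eq]

theorem run_succ_mul_run {b' : ℕ} (h₁ : b < b') (h₂ : b' ≤ a + 1) :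
    run n (a + 1) b * run n (a + 1) b' = run n a b * run n (a + 1) b' := by
  rw [run_succ h₂, ← mul_assoc, run_succ_mul_gen (by omega), mul_assoc]

theorem gen_mul_run_of_lt (h₁ : b ≤ c) (h₂ : c < a) :
    gen n c * run n a b = run n c b * run n a (c + 1) := by
  obtain ⟨B, hB, hcomm⟩ := exists_run_eq_gen_mul (n := n) h₁
  set A := run n a (c + 2)
  have hA : Commute (gen n c) A := commute_gen_run (Or.inr le_rfl)
  calc gen n c * run n a b
      = A * (gen n c * gen n (c + 1) * gen n c * B) := by
        rw [run_eq_mul (d := c + 1) (by omega) h₂, run_succ (by omega), hB, ← mul_assoc, hA.eq]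
        simp only [mul_assoc]
    _ = A * (gen n c * B) * gen n (c + 1) := by
        rw [gen_mul_gen_succ_mul_gen, mul_assoc (gen n c), hcomm.eq]
        simp only [mul_assoc]
    _ = run n c b * run n a (c + 1) := by
        rw [← hB, (commute_run_run le_rfl).eq, mul_assoc, ← run_eq_run_mul_gen (by omega)]

theorem gen_mul_run_mul_gen (h : b < a) :
    gen n b * run n a (b + 1) * gen n b = gen n b * run n a (b + 1) := by
  set A := run n a (b + 2)
  have hA : Commute (gen n b) A := commute_gen_run (Or.inr le_rfl)
  calc gen n b * run n a (b + 1) * gen n b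
      = A * (gen n b * gen n (b + 1) * gen n b) := by
        rw [run_eq_run_mul_gen h, ← mul_assoc, hA.eq]
        simp only [mul_assoc]
    _ = gen n b * run n a (b + 1) := by
        rw [gen_mul_gen_succ_mul_gen, ← mul_assoc, ← hA.eq, mul_assoc, ← run_eq_run_mul_gen h]

theorem run_mul_run {a' b' : ℕ} (h₁ : b' ≤ b) (h₂ : b ≤ a) (h₃ : a < a') :
    run n a b * run n a' b' = run n a b' * run n a' (b + 1) := by
  induction h₁ using Nat.decreasingInduction with
  | self =>
    rw [run_eq_run_mul_gen (a := a') (by omega), run_eq_run_mul_gen h₂, mul_assoc,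
      ← mul_assoc (gen n b), gen_mul_run_mul_gen (by omega), ← mul_assoc]
  | of_succ k hk ih =>
    rw [run_eq_run_mul_gen (a := a') (by omega), ← mul_assoc, ih, mul_assoc,
      ← (commute_gen_run (Or.inr (by omega))).eq, ← mul_assoc, ← run_eq_run_mul_gen (by omega)]

def runsProd (n : ℕ) (ν : List (ℕ × ℕ)) : HK (arrQn n) := (ν.map fun p => run n p.1 p.2).prod

@[simp]
theorem runsProd_cons (a b : ℕ) (ν : List (ℕ × ℕ)) :
    runsProd n ((a, b) :: ν) = run n a b * runsProd n ν := rfl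

/-- `[(a₁, b₁), …, (a_k, b_k)]` is normal above `(a₀, b₀)` when `a₀ ≤ a₁ < ⋯ < a_k < n`,
`b₀ ≤ b₁ < ⋯ < b_k` and `bᵢ ≤ aᵢ`. -/
def IsNormal (n : ℕ) : ℕ → ℕ → List (ℕ × ℕ) → Prop
  | _, _, [] => True
  | a₀, b₀, (a, b) :: ν => a₀ ≤ a ∧ b₀ ≤ b ∧ b ≤ a ∧ a < n ∧ IsNormal n (a + 1) (b + 1) ν

theorem IsNormal.mono {ν : List (ℕ × ℕ)} {a₀ b₀ a₁ b₁ : ℕ} (h : IsNormal n a₀ b₀ ν)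
    (ha : a₁ ≤ a₀) (hb : b₁ ≤ b₀) : IsNormal n a₁ b₁ ν := by
  rcases ν with _ | ⟨⟨a, b⟩, ν⟩
  · trivial
  · obtain ⟨h₁, h₂, h⟩ := h
    exact ⟨ha.trans h₁, hb.trans h₂, h⟩

theorem IsNormal.le_of_mem {ν : List (ℕ × ℕ)} {a₀ b₀ : ℕ} {p : ℕ × ℕ} (hν : IsNormal n a₀ b₀ ν)
    (hp : p ∈ ν) : a₀ ≤ p.1 ∧ b₀ ≤ p.2 := by
  induction ν generalizing a₀ b₀ with
  | nil => simp at hp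
  | cons q ν ih =>
    obtain ⟨a, b⟩ := q
    obtain ⟨ha, hb, -, -, hν⟩ := hν
    rcases List.mem_cons.1 hp with rfl | hp
    · exact ⟨ha, hb⟩
    · have := ih hν hp; omega

theorem IsNormal.of_append_singleton {ν : List (ℕ × ℕ)} {a₀ b₀ : ℕ}
    (hν : IsNormal n a₀ b₀ (ν ++ [(a, b)])) :
    IsNormal n a₀ b₀ ν ∧ b ≤ a ∧ ∀ p ∈ ν, p.1 < a ∧ p.2 < b := by
  induction ν generalizing a₀ b₀ with
  | nil => exact ⟨trivial, hν.2.2.1, by simp⟩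
  | cons p ν ih =>
    obtain ⟨a', b'⟩ := p
    obtain ⟨ha, hb, hba, han, hν⟩ := hν
    obtain ⟨hν', hab, hlt⟩ := ih hν
    refine ⟨⟨ha, hb, hba, han, hν'⟩, hab, ?_⟩
    rintro p (_ | ⟨_, hp⟩)
    · have := hν.le_of_mem (List.mem_append_right _ List.mem_cons_self)
      exact ⟨by omega, by omega⟩
    · exact hlt p hp

/-- Normal form of `run a b * runsProd ν` for `ν` normal above `(a + 1, 0)`: the runs of `ν`
with bottom `≤ b` are moved to the left by `run_mul_run`. -/
def pushRun : ℕ × ℕ → List (ℕ × ℕ) → List (ℕ × ℕ)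
  | p, [] => [p]
  | (a, b), (a', b') :: ν =>
    if b < b' then (a, b) :: (a', b') :: ν else (a, b') :: pushRun (a', b + 1) ν

theorem isNormal_pushRun {ν : List (ℕ × ℕ)} {b₀ : ℕ} (hν : IsNormal n (a + 1) b₀ ν) (hba : b ≤ a)
    (ha : a < n) : IsNormal n a (min b b₀) (pushRun (a, b) ν) := by
  induction ν generalizing a b b₀ with
  | nil => exact ⟨le_rfl, min_le_left _ _, hba, ha, trivial⟩
  | cons p ν ih =>
    obtain ⟨a', b'⟩ := p
    obtain ⟨ha', hb', hba', ha'n, hν⟩ := hν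
    unfold pushRun
    split_ifs with hbb
    · exact ⟨le_rfl, min_le_left _ _, hba, ha, ha', by omega, hba', ha'n, hν⟩
    · exact ⟨le_rfl, by omega, by omega, ha,
        (ih hν (by omega) ha'n).mono ha' (by omega)⟩

theorem runsProd_pushRun {ν : List (ℕ × ℕ)} {b₀ : ℕ} (hν : IsNormal n (a + 1) b₀ ν) (hba : b ≤ a) :
    runsProd n (pushRun (a, b) ν) = run n a b * runsProd n ν := by
  induction ν generalizing a b b₀ with
  | nil => simp [pushRun]
  | cons p ν ih =>
    obtain ⟨a', b'⟩ := p
    obtain ⟨ha', hb', hba', -, hν⟩ := hν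
    unfold pushRun
    split_ifs with hbb
    · rfl
    · rw [runsProd_cons, runsProd_cons, ih hν (by omega), ← mul_assoc, ← mul_assoc,
        run_mul_run (by omega) hba (by omega)]

/-- Normal form of `gen n c * runsProd n ν`. When `c = a + 1` and the next run of `ν` also has
top `a + 1`, the generator is absorbed (`run_succ_mul_run`). -/
def insertGen (c : ℕ) : List (ℕ × ℕ) → List (ℕ × ℕ)
  | [] => [(c, c)]
  | (a, b) :: ν =>
    if a + 2 ≤ c then (a, b) :: insertGen c ν
    else if c = a + 1 then
      if ν.head?.map Prod.fst = some (a + 1) then (a, b) :: ν else (a + 1, b) :: ν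
    else if c = a then (a, b) :: ν
    else if b ≤ c then (c, b) :: pushRun (a, c + 1) ν
    else (c, c) :: (a, b) :: ν

theorem isNormal_insertGen {ν : List (ℕ × ℕ)} {a₀ b₀ : ℕ} (hc : c < n) (hν : IsNormal n a₀ b₀ ν) :
    IsNormal n (min c a₀) (min c b₀) (insertGen c ν) := by
  induction ν generalizing a₀ b₀ with
  | nil => exact ⟨min_le_left _ _, min_le_left _ _, le_rfl, hc, trivial⟩
  | cons p ν ih =>
    obtain ⟨a, b⟩ := p
    obtain ⟨ha, hb, hba, han, hν⟩ := hν
    unfold insertGen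
    split_ifs with h₁ h₂ h₃ h₄ h₅
    · exact ⟨by omega, by omega, hba, han, (ih hν).mono (by omega) (by omega)⟩
    · rcases ν with _ | ⟨⟨a', b'⟩, ν⟩
      · simp at h₃
      · simp only [List.head?, Option.map_some, Option.some.injEq] at h₃
        exact ⟨by omega, by omega, hba, han, hν⟩
    · refine ⟨by omega, by omega, by omega, by omega, ?_⟩
      rcases ν with _ | ⟨⟨a', b'⟩, ν⟩
      · trivial
      · obtain ⟨ha', hb', hν'⟩ := hν
        simp only [List.head?, Option.map_some, Option.some.injEq] at h₃
        exact ⟨by omega, hb', hν'⟩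
    · exact ⟨by omega, by omega, hba, han, hν⟩
    · exact ⟨by omega, by omega, by omega, hc,
        (isNormal_pushRun hν (by omega) han).mono (by omega) (by omega)⟩
    · exact ⟨by omega, by omega, le_rfl, hc, by omega, by omega, hba, han, hν⟩

theorem runsProd_insertGen {ν : List (ℕ × ℕ)} {a₀ b₀ : ℕ} (hν : IsNormal n a₀ b₀ ν) :
    runsProd n (insertGen c ν) = gen n c * runsProd n ν := by
  induction ν generalizing a₀ b₀ with
  | nil => simp [insertGen, run_self]
  | cons p ν ih =>
    obtain ⟨a, b⟩ := p
    obtain ⟨ha, hb, hba, han, hν⟩ := hν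
    unfold insertGen
    split_ifs with h₁ h₂ h₃ h₄ h₅
    · rw [runsProd_cons, runsProd_cons, ih hν, ← mul_assoc, ← mul_assoc,
        (commute_gen_run (Or.inl h₁)).eq]
    · rcases ν with _ | ⟨⟨a', b'⟩, ν⟩
      · simp at h₃
      · simp only [List.head?, Option.map_some, Option.some.injEq] at h₃
        obtain ⟨-, hb', hba', -⟩ := hν
        subst h₂ h₃
        simp only [runsProd_cons, ← mul_assoc]
        rw [← run_succ (by omega), run_succ_mul_run (by omega) hba']
    · subst h₂
      simp only [runsProd_cons, ← mul_assoc, run_succ (show b ≤ a + 1 by omega)]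
    · subst h₄
      simp only [runsProd_cons]
      rw [← mul_assoc, gen_mul_run hba]
    · rw [runsProd_cons, runsProd_pushRun hν (by omega), runsProd_cons, ← mul_assoc,
        ← mul_assoc, gen_mul_run_of_lt h₅ (by omega)]
    · simp only [runsProd_cons, run_self]

theorem exists_isNormal_runsProd_eq (z : HK (arrQn n)) :
    ∃ ν, IsNormal n 0 0 ν ∧ runsProd n ν = z := by
  induction z using HK.induction_on with
  | one => exact ⟨[], trivial, rfl⟩
  | x_mul t z ih =>
    obtain ⟨ν, hν, rfl⟩ := ih
    exact ⟨insertGen t ν, (isNormal_insertGen t.2 hν).mono (Nat.zero_le _) (Nat.zero_le _),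
      by rw [runsProd_insertGen hν, gen_of_lt t.2]⟩

def toEnd (n : ℕ) : HK (arrQn n) →* Function.End ℕ :=
  HK.lift (fun t => collapse t) (fun t => collapse_mul_self t) (fun s t => collapse_braid s t)
    (fun _ _ h => collapse_absorb fun h' => h h'.symm)

theorem toEnd_gen (h : c < n) : toEnd n (gen n c) = collapse c := by
  rw [gen_of_lt h, toEnd, HK.lift_x]

theorem toEnd_mem (z : HK (arrQn n)) : toEnd n z ∈ catalanMonoid (n + 1) := by
  induction z using HK.induction_on with
  | one => exact (map_one (toEnd n)).symm ▸ Submonoid.one_mem _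
  | x_mul t z ih =>
    rw [map_mul, ← gen_of_lt t.2, toEnd_gen t.2]
    exact Submonoid.mul_mem _ (collapse_mem t.2) ih

theorem exists_toEnd_eq {f : Function.End ℕ} (hf : f ∈ catalanMonoid (n + 1)) :
    ∃ z, toEnd n z = f := by
  induction hd : ∑ y ∈ Finset.range (n + 1), (y - f y) using Nat.strong_induction_on
    generalizing f with
  | _ d ih =>
    by_cases hne : f = 1
    · exact ⟨1, by rw [map_one, hne]⟩
    obtain ⟨v, hv, g, hg, rfl, hlt⟩ := exists_eq_collapse_mul hf hne
    obtain ⟨z, rfl⟩ := ih _ (hd ▸ hlt) hg rfl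
    exact ⟨gen n v * z, by rw [map_mul, toEnd_gen hv]⟩

def runMap (a b : ℕ) : Function.End ℕ := fun x => if b < x ∧ x ≤ a + 1 then x - 1 else x

theorem toEnd_run (h : a < n) : toEnd n (run n a b) = runMap a b := by
  induction a with
  | zero =>
    rcases Nat.eq_zero_or_pos b with rfl | hb
    · rw [run_self, toEnd_gen h]
      funext x; simp only [collapse, runMap]; split_ifs <;> omega
    · rw [run_of_lt hb, map_one]
      funext x; simp only [runMap]; split_ifs <;> first | rfl | omega
  | succ a ih =>
    by_cases hb : b ≤ a + 1
    · rw [run_succ hb, map_mul, toEnd_gen h, ih (by omega)]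
      funext x
      change collapse (a + 1) (runMap a b x) = runMap (a + 1) b x
      simp only [collapse, runMap]; split_ifs <;> omega
    · rw [run_of_lt (by omega), map_one]
      funext x; simp only [runMap]; split_ifs <;> first | rfl | omega

theorem runMap_apply_le (a b x : ℕ) : runMap a b x ≤ x := by
  simp only [runMap]; split_ifs <;> omega

def runsMap (ν : List (ℕ × ℕ)) : Function.End ℕ := (ν.map fun p => runMap p.1 p.2).prod

theorem runsMap_cons (a b : ℕ) (ν : List (ℕ × ℕ)) :
    runsMap ((a, b) :: ν) = runMap a b * runsMap ν := rfl

theorem runsMap_append_singleton (ν : List (ℕ × ℕ)) (a b : ℕ) :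
    runsMap (ν ++ [(a, b)]) = runsMap ν * runMap a b := by
  simp [runsMap]

theorem toEnd_runsProd {ν : List (ℕ × ℕ)} {a₀ b₀ : ℕ} (hν : IsNormal n a₀ b₀ ν) :
    toEnd n (runsProd n ν) = runsMap ν := by
  induction ν generalizing a₀ b₀ with
  | nil => exact map_one _
  | cons p ν ih =>
    obtain ⟨a, b⟩ := p
    obtain ⟨-, -, -, han, hν⟩ := hν
    rw [runsProd_cons, map_mul, toEnd_run han, ih hν, runsMap_cons]

theorem runsMap_apply_le (ν : List (ℕ × ℕ)) (x : ℕ) : runsMap ν x ≤ x := by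
  induction ν with
  | nil => exact le_rfl
  | cons p ν ih => exact (runMap_apply_le _ _ _).trans ih

theorem runsMap_apply_of_forall_lt {ν : List (ℕ × ℕ)} {x : ℕ} (h : ∀ p ∈ ν, p.1 + 1 < x) :
    runsMap ν x = x := by
  induction ν with
  | nil => rfl
  | cons p ν ih =>
    change runMap p.1 p.2 (runsMap ν x) = x
    rw [ih fun q hq => h q (List.mem_cons_of_mem _ hq), runMap,
      if_neg (by have := h p List.mem_cons_self; omega)]

theorem min_le_runsMap_apply {ν : List (ℕ × ℕ)} {a₀ b₀ : ℕ} (hν : IsNormal n a₀ b₀ ν) (x : ℕ) :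
    min x b₀ ≤ runsMap ν x := by
  induction ν generalizing a₀ b₀ with
  | nil => exact min_le_left _ _
  | cons p ν ih =>
    obtain ⟨a, b⟩ := p
    obtain ⟨-, hb, -, -, hν⟩ := hν
    have := ih hν
    change min x b₀ ≤ runMap a b (runsMap ν x)
    simp only [runMap]; split_ifs <;> omega

theorem strictMonoOn_runsMap {ν : List (ℕ × ℕ)} {a₀ b₀ : ℕ} (hν : IsNormal n a₀ b₀ ν)
    (h : ∀ p ∈ ν, p.2 < c) : StrictMonoOn (runsMap ν) (Set.Ici c) := by
  induction ν generalizing a₀ b₀ with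
  | nil => exact strictMono_id.strictMonoOn _
  | cons p ν ih =>
    obtain ⟨a, b⟩ := p
    obtain ⟨-, -, -, -, hν⟩ := hν
    have hb : b < c := h _ List.mem_cons_self
    intro x hx y hy hxy
    have := ih hν (fun p hp => h p (List.mem_cons_of_mem _ hp)) hx hy hxy
    have := min_le_runsMap_apply hν x
    have := Set.mem_Ici.1 hx
    change runMap a b (runsMap ν x) < runMap a b (runsMap ν y)
    simp only [runMap]; split_ifs <;> omega

section Peel

variable {ν : List (ℕ × ℕ)} {a₀ b₀ : ℕ}

theorem isGreatest_runsMap_ne (hν : IsNormal n a₀ b₀ (ν ++ [(a, b)])) :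
    IsGreatest {x | runsMap (ν ++ [(a, b)]) x ≠ x} (a + 1) := by
  obtain ⟨-, hba, hlt⟩ := hν.of_append_singleton
  simp only [runsMap_append_singleton]
  refine ⟨?_, fun x hx => ?_⟩
  · have := runsMap_apply_le ν a
    change runsMap ν (runMap a b (a + 1)) ≠ a + 1
    rw [runMap, if_pos (by omega), Nat.add_sub_cancel]
    omega
  · by_contra hxa
    refine hx ?_
    change runsMap ν (runMap a b x) = x
    rw [runMap, if_neg (by omega),
      runsMap_apply_of_forall_lt fun p hp => by have := hlt p hp; omega]

theorem isGreatest_runsMap_eq_succ (hν : IsNormal n a₀ b₀ (ν ++ [(a, b)])) :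
    IsGreatest {x | runsMap (ν ++ [(a, b)]) x = runsMap (ν ++ [(a, b)]) (x + 1)} b := by
  obtain ⟨hν, hba, hlt⟩ := hν.of_append_singleton
  simp only [runsMap_append_singleton]
  refine ⟨?_, fun x hx => ?_⟩
  · change runsMap ν (runMap a b b) = runsMap ν (runMap a b (b + 1))
    rw [runMap, runMap, if_neg (by omega), if_pos (by omega), Nat.add_sub_cancel]
  · by_contra hxb
    have hmono := strictMonoOn_runsMap hν fun p hp => (hlt p hp).2
    have hlt' : runMap a b x < runMap a b (x + 1) := by
      simp only [runMap]; split_ifs <;> omega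
    have hge : ∀ y, b < y → b ≤ runMap a b y := fun y hy => by
      simp only [runMap]; split_ifs <;> omega
    exact (hmono (hge x (by omega)) (hge (x + 1) (by omega)) hlt').ne hx

theorem runsMap_eq_of_append_singleton (hν : IsNormal n a₀ b₀ (ν ++ [(a, b)])) :
    runsMap ν = fun y => if y < b then runsMap (ν ++ [(a, b)]) y
      else if y ≤ a then runsMap (ν ++ [(a, b)]) (y + 1) else y := by
  obtain ⟨-, hba, hlt⟩ := hν.of_append_singleton
  funext y
  simp only [runsMap_append_singleton]
  change _ = if y < b then runsMap ν (runMap a b y)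
    else if y ≤ a then runsMap ν (runMap a b (y + 1)) else y
  split_ifs with h₁ h₂
  · rw [runMap, if_neg (by omega)]
  · rw [runMap, if_pos (by omega), Nat.add_sub_cancel]
  · exact runsMap_apply_of_forall_lt fun p hp => by have := hlt p hp; omega

end Peel

theorem eq_of_runsMap_eq {ν ν' : List (ℕ × ℕ)} (hν : IsNormal n 0 0 ν) (hν' : IsNormal n 0 0 ν')
    (h : runsMap ν = runsMap ν') : ν = ν' := by
  induction ν using List.reverseRecOn generalizing ν' with
  | nil =>
    cases ν' using List.reverseRecOn with
    | nil => rfl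
    | append_singleton ν' p =>
      have := (isGreatest_runsMap_eq_succ hν').1
      rw [← h] at this
      exact absurd this (Nat.succ_ne_self _).symm
  | append_singleton ν p ih =>
    obtain ⟨a, b⟩ := p
    cases ν' using List.reverseRecOn with
    | nil =>
      have := (isGreatest_runsMap_eq_succ hν).1
      rw [h] at this
      exact absurd this (Nat.succ_ne_self _).symm
    | append_singleton ν' p' =>
      obtain ⟨a', b'⟩ := p'
      have ha : a + 1 = a' + 1 :=
        (isGreatest_runsMap_ne hν).unique (by rw [h]; exact isGreatest_runsMap_ne hν')
      have hb : b = b' :=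
        (isGreatest_runsMap_eq_succ hν).unique (by rw [h]; exact isGreatest_runsMap_eq_succ hν')
      obtain rfl : a = a' := by omega
      subst hb
      rw [ih hν.of_append_singleton.1 hν'.of_append_singleton.1 (by
        rw [runsMap_eq_of_append_singleton hν, runsMap_eq_of_append_singleton hν', h])]

theorem toEnd_injective : Function.Injective (toEnd n) := by
  intro z z' h
  obtain ⟨ν, hν, rfl⟩ := exists_isNormal_runsProd_eq z
  obtain ⟨ν', hν', rfl⟩ := exists_isNormal_runsProd_eq z'
  rw [toEnd_runsProd hν, toEnd_runsProd hν'] at h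
  rw [eq_of_runsMap_eq hν hν' h]

noncomputable def mulEquivCatalanMonoid (n : ℕ) : HK (arrQn n) ≃* catalanMonoid (n + 1) :=
  MulEquiv.ofBijective ((toEnd n).codRestrict _ toEnd_mem)
    ⟨fun _ _ h => toEnd_injective (congrArg Subtype.val h),
      fun f => (exists_toEnd_eq f.2).imp fun _ hz => Subtype.ext hz⟩

end HKQn

theorem hk_card_catalan_general (n : ℕ) :
    Nat.card (HK (arrQn n)) = catalan (n + 1) := by
  rw [Nat.card_congr (HKQn.mulEquivCatalanMonoid n).toEquiv, catalanMonoid.card_eq_catalan]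

/-- For every `n ≥ 1`, the cardinality of the Hecke–Kiselman monoid
of the linearly oriented type-`A` quiver `Q_n` is the `(n+1)`-st Catalan number. -/
theorem hk_card_catalan (n : ℕ) (hn : 1 ≤ n) :
    Nat.card (HK (arrQn n)) = catalan (n + 1) :=
  hk_card_catalan_general n
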